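/- arXiv:1906.04120 — 3 statements merged into one kernel-verified Lean document; each statement's English description precedes it below -/
import Mathlib

section
/- For a stream segment of length n and parameter s with 0 < s ≤ n, the expected number of elements sampled by the reversed reservoir sampling process—where the i-th most recent element is sampled independently with probability min(1, s/i)—is at most s + s·ln(n/s). -/
open Finset

/-! The first `s` ages are sampled with probability one; beyond them the expected count is
`s` times a tail of the harmonic series, and `1 / (k + 1) ≤ log (k + 1) - log k` bounds that tail
by a telescoping sum of logarithms. -/

lemma inv_succ_le_log_succ_sub_log {k : ℕ} (hk : k ≠ 0) :
    ((k + 1 : ℕ) : ℝ)⁻¹ ≤ Real.log (k + 1 : ℕ) - Real.log k := by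
  have hk' : (0 : ℝ) < k := by positivity
  have key := Real.one_sub_inv_le_log_of_pos (x := (k + 1 : ℝ) / k) (by positivity)
  rw [Real.log_div (by positivity) hk'.ne', inv_div] at key
  push_cast
  calc ((k : ℝ) + 1)⁻¹ = 1 - k / (k + 1) := by field_simp; ring
    _ ≤ _ := key

lemma sum_Ioc_inv_le_log_sub_log {k n : ℕ} (hk : k ≠ 0) (h : k ≤ n) :
    ∑ i ∈ Ioc k n, (i : ℝ)⁻¹ ≤ Real.log n - Real.log k := by
  induction n, h using Nat.le_induction with
  | base => simp
  | succ n hkn ih =>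
    rw [sum_Ioc_succ_top hkn]
    linarith [inv_succ_le_log_succ_sub_log (k := n) (by omega)]

lemma sum_Ioc_div_le_mul_log_div {s n : ℕ} (h : s ≤ n) :
    ∑ i ∈ Ioc s n, (s : ℝ) / i ≤ s * Real.log (n / s) := by
  rcases Nat.eq_zero_or_pos s with rfl | hs
  · simp
  simp_rw [div_eq_mul_inv (s : ℝ), ← mul_sum]
  have hn : (n : ℝ) ≠ 0 := by exact_mod_cast (hs.trans_le h).ne'
  rw [Real.log_div hn (by positivity)]
  gcongr
  exact sum_Ioc_inv_le_log_sub_log hs.ne' h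

lemma sum_Icc_min_one_div_eq {s n : ℕ} (h : s ≤ n) :
    ∑ i ∈ Icc 1 n, min 1 ((s : ℝ) / i) = s + ∑ i ∈ Ioc s n, (s : ℝ) / i := by
  have head : ∑ i ∈ Ioc 0 s, min 1 ((s : ℝ) / i) = s := by
    rw [sum_congr rfl fun i hi => min_eq_left ?_]
    · simp
    · rw [mem_Ioc] at hi
      rw [one_le_div (by exact_mod_cast hi.1)]
      exact_mod_cast hi.2
  have tail : ∑ i ∈ Ioc s n, min 1 ((s : ℝ) / i) = ∑ i ∈ Ioc s n, (s : ℝ) / i := by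
    refine sum_congr rfl fun i hi => min_eq_right ?_
    rw [mem_Ioc] at hi
    rw [div_le_one (by exact_mod_cast (Nat.zero_le s).trans_lt hi.1)]
    exact_mod_cast hi.1.le
  rw [← zero_add 1, Icc_add_one_left_eq_Ioc, ← sum_Ioc_consecutive _ (Nat.zero_le s) h, head, tail]

theorem expected_samples_simpleRR_general (n s : ℕ) (hsn : s ≤ n) :
    ∑ i ∈ Finset.Icc 1 n, min 1 ((s : ℝ) / i) ≤ s + s * Real.log (n / s) := by
  rw [sum_Icc_min_one_div_eq hsn]
  gcongr
  exact sum_Ioc_div_le_mul_log_div hsn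

/-- For a stream segment of length `n` and parameter `s` with
`0 < s ≤ n`, the expected number of elements sampled by reversed reservoir
sampling—where the `i`-th most recent element is sampled independently with
probability `min 1 (s/i)`—is at most `s + s * ln (n / s)`. -/
theorem expected_samples_simpleRR (n s : ℕ) (hs : 0 < s) (hsn : s ≤ n) :
    ∑ i ∈ Finset.Icc 1 n, min 1 ((s : ℝ) / i) ≤ s + s * Real.log (n / s) :=
  expected_samples_simpleRR_general n s hsn
end

section
/- Let Z = Σ_{i=2}^{n} Z_i where Z_i are independent Bernoulli variables with P(Z_i = 1) = 1/i, and let m ≥ n ≥ 2 and c ≥ 4. Then P(Z ≥ c·log₂ m) ≤ m^{−c}. -/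
/-!
Chernoff bound at `t = log 4`. A `{0,1}`-valued variable with `P(X = 1) = p` has
`E[e^{tX}] = 1 + (e^t - 1) p ≤ exp ((e^t - 1) p)`, so by independence the sum `Z` satisfies
`P(Z ≥ ε) ≤ exp (-t ε + (e^t - 1) E[Z])`. Here `E[Z] = ∑_{i=2}^n 1/i ≤ log n ≤ log m`, and with
`t = log 4`, `ε = c log₂ m` the exponent is at most `(3 - 2c) log m ≤ -c log m`.
-/

open MeasureTheory ProbabilityTheory Finset Real

theorem sum_Icc_two_inv_le_log (n : ℕ) : ∑ i ∈ Icc 2 n, (i : ℝ)⁻¹ ≤ log n := by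
  rcases Nat.eq_zero_or_pos n with rfl | hn
  · simp
  have hsplit : (harmonic n : ℝ) = 1 + ∑ i ∈ Icc 2 n, (i : ℝ)⁻¹ := by
    rw [harmonic_eq_sum_Icc, ← insert_Icc_succ_left_eq_Icc hn, sum_insert (by simp)]
    simp
  linarith [harmonic_le_one_add_log n]

section ZeroOne

variable {Ω : Type*} [MeasurableSpace Ω] {μ : Measure Ω} [IsProbabilityMeasure μ]

theorem mgf_eq_of_zero_or_one {X : Ω → ℝ} (hX : Measurable X)
    (h01 : ∀ ω, X ω = 0 ∨ X ω = 1) (t : ℝ) :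
    mgf X μ t = 1 + (exp t - 1) * μ.real {ω | X ω = 1} := by
  have hpt : (fun ω ↦ exp (t * X ω))
      = fun ω ↦ 1 + (exp t - 1) * {ω | X ω = 1}.indicator 1 ω := by
    funext ω
    rcases h01 ω with h | h <;> simp [h]
  have hmeas : MeasurableSet {ω | X ω = 1} := hX (measurableSet_singleton 1)
  rw [mgf, hpt, integral_add (integrable_const 1)
    ((integrable_indicator_iff hmeas).2 (integrable_const 1).integrableOn |>.const_mul _),
    integral_const_mul, integral_indicator_one hmeas]
  simp

theorem mgf_le_exp_of_zero_or_one {X : Ω → ℝ} (hX : Measurable X)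
    (h01 : ∀ ω, X ω = 0 ∨ X ω = 1) (t : ℝ) :
    mgf X μ t ≤ exp ((exp t - 1) * μ.real {ω | X ω = 1}) := by
  rw [mgf_eq_of_zero_or_one hX h01, add_comm]
  exact add_one_le_exp _

theorem measureReal_sum_ge_le_exp_of_zero_or_one {ι : Type*} {Z : ι → Ω → ℝ}
    (hmeas : ∀ i, Measurable (Z i)) (hindep : iIndepFun Z μ) {s : Finset ι}
    (h01 : ∀ i ∈ s, ∀ ω, Z i ω = 0 ∨ Z i ω = 1) (ε : ℝ) {t : ℝ} (ht : 0 ≤ t) :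
    μ.real {ω | ε ≤ ∑ i ∈ s, Z i ω}
      ≤ exp (-t * ε + (exp t - 1) * ∑ i ∈ s, μ.real {ω | Z i ω = 1}) := by
  have hint : ∀ i ∈ s, Integrable (fun ω ↦ exp (t * Z i ω)) μ := by
    intro i hi
    refine .of_bound ((hmeas i).const_mul t).exp.aestronglyMeasurable (exp t)
      (.of_forall fun ω ↦ ?_)
    rcases h01 i hi ω with h | h <;> simp [h, ht]
  have hchernoff := measure_ge_le_exp_mul_mgf ε ht (hindep.integrable_exp_mul_sum hmeas hint)
  simp only [Finset.sum_apply] at hchernoff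
  calc μ.real {ω | ε ≤ ∑ i ∈ s, Z i ω}
      ≤ exp (-t * ε) * ∏ i ∈ s, mgf (Z i) μ t := by rwa [← hindep.mgf_sum hmeas]
    _ ≤ exp (-t * ε) * ∏ i ∈ s, exp ((exp t - 1) * μ.real {ω | Z i ω = 1}) := by
      gcongr with i hi
      · exact fun i _ ↦ mgf_nonneg
      · exact mgf_le_exp_of_zero_or_one (hmeas i) (h01 i hi) t
    _ = _ := by rw [← exp_sum, ← mul_sum, ← exp_add]

end ZeroOne

/-- Let `Z = Σ_{i=2}^{n} Z_i` with `Z_i` independent Bernoulli,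
`P(Z_i = 1) = 1/i`, and let `m ≥ n ≥ 2`, `c ≥ 4`. Then
`P(Z ≥ c·log₂ m) ≤ m^{-c}`. -/
theorem harmonic_bernoulli_tail {Ω : Type*} [MeasurableSpace Ω]
    (μ : Measure Ω) [IsProbabilityMeasure μ] (n m : ℕ) (hn : 2 ≤ n) (hnm : n ≤ m)
    (c : ℝ) (hc : 4 ≤ c)
    (Z : ℕ → Ω → ℝ)
    (hmeas : ∀ i, Measurable (Z i))
    (hindep : ProbabilityTheory.iIndepFun Z μ)
    (hBer : ∀ i ∈ Finset.Icc 2 n, ∀ ω, Z i ω = 0 ∨ Z i ω = 1)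
    (hprob : ∀ i ∈ Finset.Icc 2 n, μ {ω | Z i ω = 1} = ENNReal.ofReal (1 / (i : ℝ))) :
    μ {ω | c * Real.logb 2 m ≤ ∑ i ∈ Finset.Icc 2 n, Z i ω}
      ≤ ENNReal.ofReal ((m : ℝ) ^ (-c)) := by
  have hm : (2 : ℝ) ≤ m := by exact_mod_cast hn.trans hnm
  have hlogm : 0 ≤ log m := log_nonneg (by linarith)
  have hmean : ∑ i ∈ Icc 2 n, μ.real {ω | Z i ω = 1} ≤ log m :=
    calc _ = ∑ i ∈ Icc 2 n, (i : ℝ)⁻¹ := sum_congr rfl fun i hi ↦ by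
            rw [measureReal_def, hprob i hi, ENNReal.toReal_ofReal (by positivity), one_div]
      _ ≤ log n := sum_Icc_two_inv_le_log n
      _ ≤ log m := log_le_log (by positivity) (by exact_mod_cast hnm)
  have hthreshold : -log 4 * (c * logb 2 m) = -2 * c * log m := by
    rw [show (4 : ℝ) = 2 ^ 2 by norm_num, log_pow, logb]
    field_simp
    push_cast
    ring
  rw [← ofReal_measureReal]
  refine ENNReal.ofReal_le_ofReal ?_
  calc _ ≤ exp (-log 4 * (c * logb 2 m)
          + (exp (log 4) - 1) * ∑ i ∈ Icc 2 n, μ.real {ω | Z i ω = 1}) :=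
        measureReal_sum_ge_le_exp_of_zero_or_one hmeas hindep hBer _ (log_nonneg (by norm_num))
    _ ≤ exp (-c * log m) := by
      rw [exp_log (by norm_num), hthreshold]
      gcongr
      linarith [mul_nonneg (by linarith : 0 ≤ c - 3) hlogm]
    _ = (m : ℝ) ^ (-c) := by rw [rpow_def_of_pos (by positivity), mul_comm]
end

section
/- In the reversed reservoir sampling process on a stream segment of length n ≥ s, for any fixed final window size i with s ≤ i ≤ n, the induced random s-permutation χ(A_i) is uniformly distributed over all s-permutations of the i most recent elements; that is, any fixed s-permutation R of X[−i:] satisfies P(R = χ(A_i)) = (i−s)!/i!. -/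
open Finset

/-- Sample space of reversed reservoir sampling restricted to ages `1..i` with
target sample size `s`: a uniformly random permutation assigning slots to the
`s` most recent ages, and, for each age `j ∈ {s+1,…,i}`, an optional slot
(`some ℓ` if the age is sampled into slot `ℓ`, `none` otherwise). -/
abbrev RROmega (s i : ℕ) : Type :=
  Equiv.Perm (Fin s) × ((Finset.Icc (s + 1) i : Finset ℕ) → Option (Fin s))

/-- Probability density of an outcome: the permutation is uniform (probability
`1/s!`), and independently each age `j > s` is sampled into a given slot with
probability `(s/j)·(1/s) = 1/j`, and left unsampled with probability `1 - s/j`. -/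
noncomputable def RRdensity (s i : ℕ) (ω : RROmega s i) : ℝ :=
  (1 / (Nat.factorial s : ℝ)) *
    ∏ j : (Finset.Icc (s + 1) i : Finset ℕ),
      (if (ω.2 j).isSome then 1 / ((j : ℕ) : ℝ) else 1 - (s : ℝ) / ((j : ℕ) : ℝ))

/-- `RRchi s i ω ℓ` is the oldest age assigned to slot `ℓ`: among the base age
`π.symm ℓ ∈ {1,…,s}` and all sampled ages `j > s` mapped to slot `ℓ`. This is
the `s`-permutation `χ(A_i) = (ν(1), …, ν(s))` induced by the sampling outcome. -/
noncomputable def RRchi (s i : ℕ) (ω : RROmega s i) (ℓ : Fin s) : ℕ :=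
  Finset.max'
    (insert ((ω.1.symm ℓ : ℕ) + 1)
      (Finset.image (fun j : (Finset.Icc (s + 1) i : Finset ℕ) => (j : ℕ))
        (Finset.univ.filter
          (fun j : (Finset.Icc (s + 1) i : Finset ℕ) => ω.2 j = some ℓ))))
    (Finset.insert_nonempty _ _)

/-
Induction on `i`, starting from `i = s`, where `χ` is read off the uniform permutation `π`.
Going from `i` to `i + 1`, the new age `i + 1` is either left out, with probability
`1 - s/(i+1)`, and then `χ` is unchanged, or sampled into slot `ℓ`, with probability
`1/(i+1)` for each `ℓ`, and then it overwrites `χ(ℓ)`. Hence an `s`-permutation `R` of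
`{1,…,i+1}` not containing `i + 1` has probability `(1 - s/(i+1)) · (i-s)!/i!`, while one with
`R ℓ₀ = i + 1` arises exactly from the `i + 1 - s` many `s`-permutations of `{1,…,i}` that
agree with `R` off `ℓ₀`, each of probability `(i-s)!/i!`, followed by sampling `i + 1` into
slot `ℓ₀`. Both give `(i+1-s)!/(i+1)!`.
-/

open Function

lemma Function.Injective.injective_update_iff {α β : Type*} [DecidableEq α] [Fintype α]
    [DecidableEq β] {R : α → β} (hR : Injective R) {a : α} {v : β} :
    Injective (update R a v) ↔ v ∉ (univ.erase a).image R := by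
  simp only [mem_image, mem_erase, mem_univ, and_true, not_exists, not_and]
  refine ⟨fun h b hb hv => hb (h ?_), fun h x y hxy => ?_⟩
  · rw [update_of_ne hb, update_self, hv]
  · rcases eq_or_ne x a with rfl | hx <;> rcases eq_or_ne y x with rfl | hy
    · rfl
    · rw [update_self, update_of_ne hy] at hxy
      exact absurd hxy.symm (h y hy)
    · rfl
    · rcases eq_or_ne y a with rfl | hya
      · rw [update_self, update_of_ne hx] at hxy
        exact absurd hxy (h x hx)
      · rw [update_of_ne hx, update_of_ne hya] at hxy
        exact hR hxy

lemma Function.Injective.card_filter_injective_update {α β : Type*} [DecidableEq α]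
    [Fintype α] [DecidableEq β] {R : α → β} (hR : Injective R) {a : α} {V : Finset β}
    (hV : ∀ b ≠ a, R b ∈ V) :
    #(V.filter fun v => Injective (update R a v)) = #V + 1 - Fintype.card α := by
  have hsub : (univ.erase a).image R ⊆ V := fun v hv => by
    obtain ⟨b, hb, rfl⟩ := mem_image.1 hv
    exact hV b (ne_of_mem_erase hb)
  have hcard := card_le_card hsub
  simp only [hR.injective_update_iff, ← sdiff_eq_filter, card_sdiff_of_subset hsub,
    card_image_of_injective _ hR, card_erase_of_mem (mem_univ a), card_univ] at hcard ⊢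
  have : 0 < Fintype.card α := Fintype.card_pos_iff.2 ⟨a⟩
  omega

lemma Finset.sum_ite_eq_update {α β M : Type*} [DecidableEq α] [Fintype α] [DecidableEq β]
    [AddCommMonoid M] {f R : α → β} {a : α} {V : Finset β} (hf : f a ∈ V) (x : M) :
    ∑ v ∈ V, (if f = update R a v then x else 0) = if update f a (R a) = R then x else 0 := by
  simp only [update_eq_iff, eq_update_iff, true_and, ite_and, sum_ite_eq, if_pos hf]

namespace ReversedReservoir

variable {s i : ℕ}

def newAgeEquiv (hsi : s ≤ i) :
    Option (Icc (s + 1) i : Finset ℕ) ≃ (Icc (s + 1) (i + 1) : Finset ℕ) :=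
  (Finset.subtypeInsertEquivOption (by simp : i + 1 ∉ Icc (s + 1) i)).symm.trans
    (Equiv.subtypeEquivProp (by rw [insert_Icc_right_eq_Icc_add_one (by omega)]))

@[simp] lemma coe_newAgeEquiv_none (hsi : s ≤ i) : (newAgeEquiv hsi none : ℕ) = i + 1 := rfl

@[simp] lemma coe_newAgeEquiv_some (hsi : s ≤ i) (j : (Icc (s + 1) i : Finset ℕ)) :
    (newAgeEquiv hsi (some j) : ℕ) = j := rfl

def extendOutcome (hsi : s ≤ i) : RROmega s i × Option (Fin s) ≃ RROmega s (i + 1) :=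
  (Equiv.prodAssoc _ _ _).trans <| (Equiv.refl _).prodCongr <|
    (Equiv.prodComm _ _).trans <|
      (Equiv.piOptionEquivProd (β := fun _ => Option (Fin s))).symm.trans <|
        (newAgeEquiv hsi).arrowCongr (Equiv.refl _)

@[simp] lemma extendOutcome_fst (hsi : s ≤ i) (ω : RROmega s i) (o : Option (Fin s)) :
    (extendOutcome hsi (ω, o)).1 = ω.1 := rfl

@[simp] lemma extendOutcome_snd_newAgeEquiv (hsi : s ≤ i) (ω : RROmega s i)
    (o : Option (Fin s)) (x : Option (Icc (s + 1) i : Finset ℕ)) :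
    (extendOutcome hsi (ω, o)).2 (newAgeEquiv hsi x) = x.elim o ω.2 := by
  cases x <;> simp [extendOutcome]

noncomputable def sampleWeight (s j : ℕ) (o : Option (Fin s)) : ℝ :=
  if o.isSome then 1 / (j : ℝ) else 1 - (s : ℝ) / (j : ℝ)

lemma RRdensity_eq_prod_sampleWeight (ω : RROmega s i) :
    RRdensity s i ω =
      1 / (s.factorial : ℝ) * ∏ j : (Icc (s + 1) i : Finset ℕ), sampleWeight s j (ω.2 j) :=
  rfl

lemma RRdensity_extendOutcome (hsi : s ≤ i) (ω : RROmega s i) (o : Option (Fin s)) :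
    RRdensity s (i + 1) (extendOutcome hsi (ω, o)) =
      RRdensity s i ω * sampleWeight s (i + 1) o := by
  rw [RRdensity_eq_prod_sampleWeight, RRdensity_eq_prod_sampleWeight,
    ← (newAgeEquiv hsi).prod_comp, Fintype.prod_option]
  simp only [extendOutcome_snd_newAgeEquiv, coe_newAgeEquiv_none, coe_newAgeEquiv_some,
    Option.elim_none, Option.elim_some]
  ring

noncomputable def slotAges (s i : ℕ) (ω : RROmega s i) (ℓ : Fin s) : Finset ℕ :=
  insert ((ω.1.symm ℓ : ℕ) + 1)
    ((univ.filter fun j : (Icc (s + 1) i : Finset ℕ) => ω.2 j = some ℓ).image (↑))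

lemma mem_slotAges {ω : RROmega s i} {ℓ : Fin s} {n : ℕ} :
    n ∈ slotAges s i ω ℓ ↔
      n = (ω.1.symm ℓ : ℕ) + 1 ∨
        ∃ j : (Icc (s + 1) i : Finset ℕ), ω.2 j = some ℓ ∧ (j : ℕ) = n := by
  simp [slotAges]

lemma slotAges_subset_Icc (hsi : s ≤ i) (ω : RROmega s i) (ℓ : Fin s) :
    slotAges s i ω ℓ ⊆ Icc 1 i := by
  intro n hn
  rcases mem_slotAges.1 hn with rfl | ⟨j, -, rfl⟩
  · have := (ω.1.symm ℓ).isLt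
    simp only [mem_Icc]
    omega
  · have := mem_Icc.1 j.2
    simp only [mem_Icc]
    omega

lemma eq_of_mem_slotAges {ω : RROmega s i} {ℓ ℓ' : Fin s} {n : ℕ}
    (h : n ∈ slotAges s i ω ℓ) (h' : n ∈ slotAges s i ω ℓ') : ℓ = ℓ' := by
  rcases mem_slotAges.1 h with rfl | ⟨j, hj, rfl⟩ <;>
    rcases mem_slotAges.1 h' with h' | ⟨j', hj', h'⟩
  · exact ω.1.symm.injective (Fin.ext (by omega))
  · have := mem_Icc.1 j'.2
    have := (ω.1.symm ℓ).isLt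
    omega
  · have := mem_Icc.1 j.2
    have := (ω.1.symm ℓ').isLt
    omega
  · rw [Subtype.ext h'] at hj'
    exact Option.some_injective _ (hj.symm.trans hj')

lemma RRchi_mem_slotAges (ω : RROmega s i) (ℓ : Fin s) :
    RRchi s i ω ℓ ∈ slotAges s i ω ℓ :=
  max'_mem _ _

lemma RRchi_mem_Icc (hsi : s ≤ i) (ω : RROmega s i) (ℓ : Fin s) :
    RRchi s i ω ℓ ∈ Icc 1 i :=
  slotAges_subset_Icc hsi ω ℓ (RRchi_mem_slotAges ω ℓ)

lemma RRchi_injective (ω : RROmega s i) : Injective (RRchi s i ω) := fun ℓ ℓ' h =>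
  eq_of_mem_slotAges (RRchi_mem_slotAges ω ℓ) (h ▸ RRchi_mem_slotAges ω ℓ')

lemma RRchi_congr {i' : ℕ} {ω : RROmega s i} {ω' : RROmega s i'} {ℓ ℓ' : Fin s}
    (h : slotAges s i ω ℓ = slotAges s i' ω' ℓ') :
    RRchi s i ω ℓ = RRchi s i' ω' ℓ' := by
  change (slotAges s i ω ℓ).max' _ = (slotAges s i' ω' ℓ').max' _
  congr 1

lemma mem_slotAges_extendOutcome (hsi : s ≤ i) {ω : RROmega s i} {o : Option (Fin s)}
    {ℓ : Fin s} {n : ℕ} :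
    n ∈ slotAges s (i + 1) (extendOutcome hsi (ω, o)) ℓ ↔
      n ∈ slotAges s i ω ℓ ∨ (o = some ℓ ∧ n = i + 1) := by
  simp only [mem_slotAges, (newAgeEquiv hsi).symm.exists_congr_left, Equiv.symm_symm,
    Option.exists, extendOutcome_snd_newAgeEquiv, extendOutcome_fst, coe_newAgeEquiv_none,
    coe_newAgeEquiv_some, Option.elim_none, Option.elim_some]
  grind

lemma RRchi_extendOutcome_none (hsi : s ≤ i) (ω : RROmega s i) :
    RRchi s (i + 1) (extendOutcome hsi (ω, none)) = RRchi s i ω := by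
  funext ℓ
  refine RRchi_congr (ext fun n => ?_)
  simp [mem_slotAges_extendOutcome]

lemma RRchi_extendOutcome_some (hsi : s ≤ i) (ω : RROmega s i) (ℓ₀ : Fin s) :
    RRchi s (i + 1) (extendOutcome hsi (ω, some ℓ₀)) =
      update (RRchi s i ω) ℓ₀ (i + 1) := by
  funext ℓ
  rcases eq_or_ne ℓ ℓ₀ with rfl | hℓ
  · rw [update_self]
    refine le_antisymm (max'_le _ _ _ fun n hn => ?_)
      (le_max' _ _ ((mem_slotAges_extendOutcome hsi).2 (Or.inr ⟨rfl, rfl⟩)))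
    rcases (mem_slotAges_extendOutcome hsi).1 hn with hn | ⟨-, rfl⟩
    · exact (mem_Icc.1 (slotAges_subset_Icc hsi ω ℓ hn)).2.trans (Nat.le_succ i)
    · rfl
  · rw [update_of_ne hℓ]
    refine RRchi_congr (ext fun n => ?_)
    simp [mem_slotAges_extendOutcome, Ne.symm hℓ]

noncomputable def RRchiProb (s i : ℕ) (R : Fin s → ℕ) : ℝ :=
  ∑ ω : RROmega s i, if RRchi s i ω = R then RRdensity s i ω else 0

lemma RRchiProb_eq_zero (hsi : s ≤ i) {R : Fin s → ℕ}
    (hR : ¬(Injective R ∧ ∀ ℓ, R ℓ ∈ Icc 1 i)) : RRchiProb s i R = 0 :=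
  sum_eq_zero fun ω _ => if_neg fun (h : RRchi s i ω = R) =>
    hR (h ▸ ⟨RRchi_injective ω, RRchi_mem_Icc hsi ω⟩)

lemma RRchiProb_succ (hsi : s ≤ i) (R : Fin s → ℕ) :
    RRchiProb s (i + 1) R = (1 - s / (i + 1 : ℝ)) * RRchiProb s i R +
      1 / (i + 1 : ℝ) * ∑ ℓ₀, ∑ ω : RROmega s i,
        if update (RRchi s i ω) ℓ₀ (i + 1) = R then RRdensity s i ω else 0 := by
  rw [RRchiProb, RRchiProb, ← (extendOutcome hsi).sum_comp, Fintype.sum_prod_type, sum_comm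
    (γ := Fin s), mul_sum, mul_sum, ← sum_add_distrib]
  refine sum_congr rfl fun ω _ => ?_
  simp only [Fintype.sum_option, RRchi_extendOutcome_none, RRchi_extendOutcome_some,
    RRdensity_extendOutcome, sampleWeight, Option.isSome_none, Option.isSome_some]
  push_cast
  simp only [mul_sum, mul_ite, mul_zero, mul_comm (RRdensity s i ω)]

instance isEmpty_Icc_succ_self : IsEmpty (Icc (s + 1) s : Finset ℕ) :=
  ⟨fun j => by have := mem_Icc.1 j.2; omega⟩

lemma RRdensity_base (ω : RROmega s s) : RRdensity s s ω = 1 / s.factorial := by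
  simp [RRdensity]

lemma RRchi_base (ω : RROmega s s) (ℓ : Fin s) : RRchi s s ω ℓ = ω.1.symm ℓ + 1 := by
  have h : slotAges s s ω ℓ = {(ω.1.symm ℓ : ℕ) + 1} := by
    ext n
    simp [mem_slotAges]
  change (slotAges s s ω ℓ).max' _ = _
  simp only [h, max'_singleton]

lemma exists_perm_add_one_eq {R : Fin s → ℕ} (hinj : Injective R)
    (hmem : ∀ ℓ, R ℓ ∈ Icc 1 s) :
    ∃ σ : Equiv.Perm (Fin s), ∀ ℓ, (σ ℓ : ℕ) + 1 = R ℓ := by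
  have hR ℓ := mem_Icc.1 (hmem ℓ)
  let f : Fin s → Fin s := fun ℓ => ⟨R ℓ - 1, by have := hR ℓ; omega⟩
  have hf : Injective f := fun a b hab => hinj (by have := Fin.val_eq_of_eq hab; grind)
  exact ⟨Equiv.ofBijective f (Finite.injective_iff_bijective.1 hf), fun ℓ => by
    have := hR ℓ; simp [f]; omega⟩

lemma RRchiProb_base {R : Fin s → ℕ} (hinj : Injective R) (hmem : ∀ ℓ, R ℓ ∈ Icc 1 s) :
    RRchiProb s s R = 1 / s.factorial := by
  obtain ⟨σ, hσ⟩ := exists_perm_add_one_eq hinj hmem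
  have hR (ω : RROmega s s) : RRchi s s ω = R ↔ ω.1 = σ.symm := by
    rw [← Equiv.symm_bijective.injective.eq_iff, Equiv.symm_symm, Equiv.ext_iff, funext_iff]
    simp only [RRchi_base, ← hσ, add_left_inj, Fin.val_inj]
  simp only [RRchiProb, hR, RRdensity_base, Fintype.sum_prod_type, Fintype.sum_unique,
    Fintype.sum_ite_eq']

lemma sum_ite_update_RRchi_eq (hsi : s ≤ i) {R : Fin s → ℕ} {ℓ₀ : Fin s} {a : ℕ}
    (ha : R ℓ₀ = a) :
    ∑ ω : RROmega s i, (if update (RRchi s i ω) ℓ₀ a = R then RRdensity s i ω else 0) =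
      ∑ v ∈ Icc 1 i, RRchiProb s i (update R ℓ₀ v) := by
  subst ha
  simp only [RRchiProb]
  rw [sum_comm]
  exact sum_congr rfl fun ω _ => (sum_ite_eq_update (RRchi_mem_Icc hsi ω ℓ₀) _).symm

lemma factorial_ratio_succ (hsi : s ≤ i) :
    ((i + 1 - s).factorial : ℝ) / (i + 1).factorial =
      (i + 1 - s : ℕ) / (i + 1 : ℝ) * ((i - s).factorial / i.factorial) := by
  rw [Nat.sub_add_comm hsi, Nat.factorial_succ, Nat.factorial_succ]
  push_cast
  field_simp

variable (hsi : s ≤ i)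
  (IH : ∀ R : Fin s → ℕ, Injective R → (∀ ℓ, R ℓ ∈ Icc 1 i) →
    RRchiProb s i R = (i - s).factorial / i.factorial)
include hsi IH

lemma RRchiProb_succ_of_apply_eq {R : Fin s → ℕ} (hinj : Injective R)
    (hmem : ∀ ℓ, R ℓ ∈ Icc 1 (i + 1)) {ℓ₀ : Fin s} (hℓ₀ : R ℓ₀ = i + 1) :
    RRchiProb s (i + 1) R = (i + 1 - s).factorial / (i + 1).factorial := by
  have hold : RRchiProb s i R = 0 := RRchiProb_eq_zero hsi fun h => by
    have := mem_Icc.1 (h.2 ℓ₀)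
    omega
  have hother (ℓ : Fin s) (hℓ : ℓ ≠ ℓ₀) (ω : RROmega s i) :
      update (RRchi s i ω) ℓ (i + 1) ≠ R := fun h =>
    hℓ (hinj (by rw [← congrFun h ℓ, update_self, hℓ₀]))
  have hcard : #((Icc 1 i).filter fun v => Injective (update R ℓ₀ v)) = i + 1 - s := by
    rw [hinj.card_filter_injective_update fun ℓ hℓ => ?_, Nat.card_Icc, Fintype.card_fin]
    · omega
    · have := mem_Icc.1 (hmem ℓ)
      have := hinj.ne hℓ
      rw [mem_Icc]
      omega
  have hterm : ∀ v ∈ Icc 1 i, RRchiProb s i (update R ℓ₀ v) =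
      if Injective (update R ℓ₀ v) then ((i - s).factorial / i.factorial : ℝ) else 0 := by
    intro v hv
    split_ifs with h
    · refine IH _ h fun ℓ => ?_
      rcases eq_or_ne ℓ ℓ₀ with rfl | hℓ
      · rwa [update_self]
      · have := mem_Icc.1 (hmem ℓ)
        have := hinj.ne hℓ
        rw [update_of_ne hℓ, mem_Icc]
        omega
    · exact RRchiProb_eq_zero hsi fun h' => h h'.1
  rw [RRchiProb_succ hsi, hold, Fintype.sum_eq_single ℓ₀ fun ℓ hℓ =>
    sum_eq_zero fun ω _ => if_neg (hother ℓ hℓ ω), sum_ite_update_RRchi_eq hsi hℓ₀,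
    sum_congr rfl hterm, ← sum_filter, sum_const, hcard, nsmul_eq_mul, factorial_ratio_succ hsi]
  ring

lemma RRchiProb_succ_of_forall_ne {R : Fin s → ℕ} (hinj : Injective R)
    (hmem : ∀ ℓ, R ℓ ∈ Icc 1 (i + 1)) (hR : ∀ ℓ, R ℓ ≠ i + 1) :
    RRchiProb s (i + 1) R = (i + 1 - s).factorial / (i + 1).factorial := by
  have hmem' ℓ : R ℓ ∈ Icc 1 i := by
    have := mem_Icc.1 (hmem ℓ)
    have := hR ℓ
    simp only [mem_Icc]
    omega
  have hnew (ℓ₀ : Fin s) (ω : RROmega s i) :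
      update (RRchi s i ω) ℓ₀ (i + 1) ≠ R := fun h =>
    hR ℓ₀ (by rw [← h, update_self])
  simp only [RRchiProb_succ hsi, IH R hinj hmem', hnew, if_false, sum_const_zero, mul_zero,
    add_zero, factorial_ratio_succ hsi, Nat.cast_sub (hsi.trans i.le_succ)]
  field_simp
  push_cast
  ring

end ReversedReservoir

theorem RRchi_uniform_general (s i : ℕ) (hsi : s ≤ i)
    (R : Fin s → ℕ) (hinj : Function.Injective R)
    (hmem : ∀ ℓ, R ℓ ∈ Finset.Icc 1 i) :
    ∑ ω : RROmega s i, (if RRchi s i ω = R then RRdensity s i ω else 0)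
      = (Nat.factorial (i - s) : ℝ) / (Nat.factorial i) := by
  open ReversedReservoir in
  induction i, hsi using Nat.le_induction generalizing R with
  | base =>
    rw [Nat.sub_self, Nat.factorial_zero, Nat.cast_one]
    exact RRchiProb_base hinj hmem
  | succ i hsi IH =>
    by_cases hR : ∃ ℓ₀, R ℓ₀ = i + 1
    · obtain ⟨ℓ₀, hℓ₀⟩ := hR
      exact RRchiProb_succ_of_apply_eq hsi IH hinj hmem hℓ₀
    · exact RRchiProb_succ_of_forall_ne hsi IH hinj hmem (not_exists.1 hR)

/-- In reversed reservoir sampling, for `s ≤ i ≤ n`, the random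
`s`-permutation `χ(A_i)` is uniform over all `s`-permutations of the `i` most
recent elements: any fixed `s`-permutation `R` of `X[-i:]` (an injective map
from slots to ages in `{1,…,i}`) occurs with probability `(i-s)!/i!`. -/
theorem RRchi_uniform (s i : ℕ) (hs : 1 ≤ s) (hsi : s ≤ i)
    (R : Fin s → ℕ) (hinj : Function.Injective R)
    (hmem : ∀ ℓ, R ℓ ∈ Finset.Icc 1 i) :
    ∑ ω : RROmega s i, (if RRchi s i ω = R then RRdensity s i ω else 0)
      = (Nat.factorial (i - s) : ℝ) / (Nat.factorial i) :=
  RRchi_uniform_general s i hsi R hinj hmem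
end
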